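/- If λ₀,...,λ_N are real numbers (pairwise distinct), then the fundamental function Φ_{(λ₀,...,λ_N)}(t) = Σⱼ e^{λⱼ t}/∏_{k≠j}(λⱼ - λ_k) is strictly positive for all t > 0. -/

import Mathlib

open Real Finset

/-- The fundamental exponential polynomial for pairwise distinct real frequencies. -/
noncomputable def fundPhi {N : ℕ} (μ : Fin N → ℝ) (t : ℝ) : ℝ :=
  ∑ j, Real.exp (μ j * t) / ∏ k ∈ Finset.univ.erase j, (μ j - μ k)

/-!
Adjoining a frequency `a` to `s` is convolution with `exp (a ·)`:
`Φ_{s ∪ {a}}(t) = ∫₀ᵗ exp (a (t - u)) Φ_s(u) du`, i.e. variation of constants for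
`(d/dt - a) y = Φ_s` with zero initial data. Evaluating the integral termwise, the resulting
`exp (a t)` terms match the `a`-term of `Φ_{s ∪ {a}}` by the partial-fraction identity
`∑ⱼ 1 / ∏_{k ≠ j} (λⱼ - λₖ) = 0`.
Since `Φ_{(λ₀)} = exp (λ₀ t) > 0`, induction on the number of frequencies gives positivity for
`t > 0`, the integrand being positive on `(0, t)`.
-/

theorem Lagrange.sum_inv_prod_erase_sub_eq_zero {F ι : Type*} [Field F] [DecidableEq ι]
    {s : Finset ι} {v : ι → F} (hvs : Set.InjOn v s) (hs : 1 < #s) :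
    ∑ i ∈ s, (∏ j ∈ s.erase i, (v i - v j))⁻¹ = 0 := by
  have h := Lagrange.coeff_eq_sum hvs (P := 1) (by
    rw [Polynomial.degree_one]; exact_mod_cast (zero_lt_one.trans hs))
  rw [Polynomial.coeff_one, if_neg (by omega)] at h
  simpa only [Polynomial.eval_one, one_div] using h.symm

theorem integral_exp_mul {a b c : ℝ} (hc : c ≠ 0) :
    ∫ x in a..b, exp (c * x) = (exp (c * b) - exp (c * a)) / c := by
  rw [intervalIntegral.integral_comp_mul_left (fun x => exp x) hc, integral_exp, smul_eq_mul,
    inv_mul_eq_div]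

theorem integral_exp_mul_sub_mul_exp_mul {a b t : ℝ} (hab : a ≠ b) :
    ∫ u in (0 : ℝ)..t, exp (a * (t - u)) * exp (b * u) = (exp (b * t) - exp (a * t)) / (b - a) := by
  have hsplit : ∀ u, exp (a * (t - u)) * exp (b * u) = exp (a * t) * exp ((b - a) * u) := by
    intro u; rw [← exp_add, ← exp_add]; ring_nf
  simp_rw [hsplit]
  rw [intervalIntegral.integral_const_mul, integral_exp_mul (sub_ne_zero.mpr hab.symm),
    mul_zero, exp_zero, mul_div_assoc', mul_sub, ← exp_add, mul_one]
  ring_nf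

section FundPhiOn

variable {ι : Type*} [DecidableEq ι]

noncomputable def fundPhiOn (s : Finset ι) (v : ι → ℝ) (t : ℝ) : ℝ :=
  ∑ j ∈ s, exp (v j * t) / ∏ k ∈ s.erase j, (v j - v k)

theorem fundPhi_eq_fundPhiOn_univ {N : ℕ} (μ : Fin N → ℝ) : fundPhi μ = fundPhiOn univ μ := rfl

@[fun_prop]
theorem continuous_fundPhiOn (s : Finset ι) (v : ι → ℝ) : Continuous (fundPhiOn s v) := by
  unfold fundPhiOn
  fun_prop

@[simp]
theorem fundPhiOn_singleton (a : ι) (v : ι → ℝ) (t : ℝ) :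
    fundPhiOn {a} v t = exp (v a * t) := by
  simp [fundPhiOn]

theorem prod_erase_insert_sub {s : Finset ι} {a j : ι} (ha : a ∉ s) (hj : j ∈ s) (v : ι → ℝ) :
    ∏ k ∈ (insert a s).erase j, (v j - v k) = (v j - v a) * ∏ k ∈ s.erase j, (v j - v k) := by
  rw [erase_insert_of_ne (ne_of_mem_of_not_mem hj ha).symm, prod_insert (by simp [ha])]

theorem fundPhiOn_insert {s : Finset ι} {a : ι} {v : ι → ℝ} (ha : a ∉ s) (hs : s.Nonempty)
    (hv : Set.InjOn v ↑(insert a s)) (t : ℝ) :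
    fundPhiOn (insert a s) v t = ∫ u in (0 : ℝ)..t, exp (v a * (t - u)) * fundPhiOn s v u := by
  set P : ι → ℝ := fun j => ∏ k ∈ s.erase j, (v j - v k)
  have hne : ∀ j ∈ s, v a ≠ v j := fun j hj h =>
    ne_of_mem_of_not_mem hj ha (hv (by simp [hj]) (by simp) h.symm)
  have hpartial : ∑ j ∈ s, ((v j - v a) * P j)⁻¹ = -(∏ k ∈ s, (v a - v k))⁻¹ := by
    have h := Lagrange.sum_inv_prod_erase_sub_eq_zero hv (by
      rw [card_insert_of_notMem ha]; exact Nat.lt_add_of_pos_left hs.card_pos)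
    rw [sum_insert ha, erase_insert ha, add_comm, ← eq_neg_iff_add_eq_zero] at h
    rw [← h]
    exact sum_congr rfl fun j hj => by rw [prod_erase_insert_sub ha hj]
  have hint : ∀ j ∈ s, ∫ u in (0 : ℝ)..t, exp (v a * (t - u)) * (exp (v j * u) / P j) =
      (exp (v j * t) - exp (v a * t)) * ((v j - v a) * P j)⁻¹ := fun j hj => by
    simp_rw [← mul_div_assoc]
    rw [intervalIntegral.integral_div, integral_exp_mul_sub_mul_exp_mul (hne j hj), div_div,
      div_eq_mul_inv]
  calc fundPhiOn (insert a s) v t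
      = ∑ j ∈ s, exp (v j * t) * ((v j - v a) * P j)⁻¹
          + exp (v a * t) * (∏ k ∈ s, (v a - v k))⁻¹ := by
        rw [fundPhiOn, sum_insert ha, erase_insert ha, add_comm, div_eq_mul_inv]
        exact congrArg₂ _ (sum_congr rfl fun j hj => by
          rw [prod_erase_insert_sub ha hj, div_eq_mul_inv]) rfl
    _ = ∑ j ∈ s, (exp (v j * t) - exp (v a * t)) * ((v j - v a) * P j)⁻¹ := by
        rw [sum_congr rfl fun j _ => sub_mul (exp (v j * t)) (exp (v a * t)) _, sum_sub_distrib,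
          ← mul_sum, hpartial]
        ring
    _ = ∫ u in (0 : ℝ)..t, exp (v a * (t - u)) * fundPhiOn s v u := by
        simp_rw [fundPhiOn, mul_sum]
        rw [intervalIntegral.integral_finsetSum (fun j _ => by
          apply Continuous.intervalIntegrable; fun_prop)]
        exact (sum_congr rfl hint).symm

theorem fundPhiOn_pos {s : Finset ι} (hs : s.Nonempty) {v : ι → ℝ} (hv : Set.InjOn v s)
    {t : ℝ} (ht : 0 < t) : 0 < fundPhiOn s v t := by
  induction hs using Finset.Nonempty.cons_induction generalizing t with
  | singleton a => simpa using exp_pos _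
  | cons a s ha hs ih =>
    rw [cons_eq_insert] at hv ⊢
    rw [fundPhiOn_insert ha hs hv]
    refine intervalIntegral.intervalIntegral_pos_of_pos_on ?_ (fun u hu => ?_) ht
    · apply Continuous.intervalIntegrable
      fun_prop
    · exact mul_pos (exp_pos _) (ih (hv.mono (subset_insert a s)) hu.1)

end FundPhiOn

theorem stmt_14 (N : ℕ) (l : Fin (N + 1) → ℝ) (hinj : Function.Injective l) :
    ∀ t : ℝ, 0 < t → 0 < fundPhi l t := fun _ ht =>
  fundPhi_eq_fundPhiOn_univ l ▸ fundPhiOn_pos univ_nonempty hinj.injOn ht
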